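/- arXiv:1006.2582 — 2 statements merged into one kernel-verified Lean document; each statement's English description precedes it below -/
import Mathlib

section
/- Let φ: E → F be a morphism of bounded spectral sequences living in columns p ≥ 0, converging to filtered abutments H_E and H_F. Suppose φ_2^{p,q} is an isomorphism for all p > 1, an epimorphism for p = 1, and zero for p = 0. Then φ_∞^{p,q} is an epimorphism for every p ≥ 1, and the image of the induced map H(φ): H_E → H_F equals L^1 H_F. -/
open CategoryTheory

/-- A bounded, convergent, cohomological spectral sequence of abelian groups,
starting at the `E₂`-page.  The field `E r` is the page `E_{r+2}`; `d` is the
differential `E_r^{p,q} → E_r^{p+r, q-r+1}`; `next` identifies the `(r+1)`-st page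
with the homology (kernel modulo image) of the `r`-th page; `H` is the graded
abutment, with finite decreasing filtration `L` whose graded pieces
`L^s H^{s+t}/L^{s+1} H^{s+t}` are identified (`stabIso`) with the stable value
`E_∞^{s,t} = E_r^{s,t}` for `r ≥ stab s t`. -/
structure ConvSS : Type 1 where
  E : ℕ → ℤ → ℤ → AddCommGrpCat.{0}
  d : ∀ (r : ℕ) (p q p' q' : ℤ), p + ((r : ℤ) + 2) = p' → q - ((r : ℤ) + 2) + 1 = q' →
      (↥(E r p q) →+ ↥(E r p' q'))
  d_comp_d : ∀ (r : ℕ) (p q p' q' p'' q'' : ℤ) (h1 : p + ((r : ℤ) + 2) = p')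
      (h2 : q - ((r : ℤ) + 2) + 1 = q') (h3 : p' + ((r : ℤ) + 2) = p'')
      (h4 : q' - ((r : ℤ) + 2) + 1 = q''),
      (d r p' q' p'' q'' h3 h4).comp (d r p q p' q' h1 h2) = 0
  next : ∀ (r : ℕ) (p q : ℤ),
      ↥(E (r + 1) p q) ≃+
        (↥((d r p q (p + ((r : ℤ) + 2)) (q - ((r : ℤ) + 2) + 1) rfl rfl).ker) ⧸
          ((d r (p - ((r : ℤ) + 2)) (q + ((r : ℤ) + 2) - 1) p q (by ring)
              (by ring)).range.addSubgroupOf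
            (d r p q (p + ((r : ℤ) + 2)) (q - ((r : ℤ) + 2) + 1) rfl rfl).ker))
  bound : ℕ
  bdd : ∀ (r : ℕ) (p q : ℤ), ((bound : ℤ) < |p| ∨ (bound : ℤ) < |q|) →
      Subsingleton ↥(E r p q)
  H : ℤ → AddCommGrpCat.{0}
  L : ℤ → (n : ℤ) → AddSubgroup ↥(H n)
  L_antitone : ∀ n : ℤ, Antitone (fun s => L s n)
  L_exhaustive : ∀ n : ℤ, ∃ s : ℤ, L s n = ⊤
  L_separated : ∀ n : ℤ, ∃ s : ℤ, L s n = ⊥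
  stab : ℤ → ℤ → ℕ
  stabIso : ∀ (s t : ℤ) (r : ℕ), stab s t ≤ r →
      ((↥(L s (s + t)) ⧸ (L (s + 1) (s + t)).addSubgroupOf (L s (s + t))) ≃+
        ↥(E r s t))

/-- A morphism of convergent spectral sequences: maps on every page commuting with the
differentials and compatible with the passage to the next page (induced map on
homology), together with a filtered map of abutments compatible with the
identification of the graded pieces with the stable pages. -/
structure ConvSS.Hom (A B : ConvSS) where
  f : ∀ (r : ℕ) (p q : ℤ), ↥(A.E r p q) →+ ↥(B.E r p q)
  comm : ∀ (r : ℕ) (p q p' q' : ℤ) (h1 : p + ((r : ℤ) + 2) = p')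
      (h2 : q - ((r : ℤ) + 2) + 1 = q'),
      (f r p' q').comp (A.d r p q p' q' h1 h2) = (B.d r p q p' q' h1 h2).comp (f r p q)
  compat_next : ∀ (r : ℕ) (p q : ℤ)
      (x : ↥((A.d r p q (p + ((r : ℤ) + 2)) (q - ((r : ℤ) + 2) + 1) rfl rfl).ker))
      (y : ↥((B.d r p q (p + ((r : ℤ) + 2)) (q - ((r : ℤ) + 2) + 1) rfl rfl).ker))
      (_ : (y : ↥(B.E r p q)) = f r p q (x : ↥(A.E r p q)))
      (z : ↥(A.E (r + 1) p q)),
      A.next r p q z = QuotientAddGroup.mk x →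
      B.next r p q (f (r + 1) p q z) = QuotientAddGroup.mk y
  h : ∀ n : ℤ, ↥(A.H n) →+ ↥(B.H n)
  filt : ∀ (s n : ℤ), (A.L s n).map (h n) ≤ B.L s n
  compat_abut : ∀ (s t : ℤ) (r : ℕ) (hA : A.stab s t ≤ r) (hB : B.stab s t ≤ r)
      (x : ↥(A.L s (s + t))) (y : ↥(B.L s (s + t)))
      (_ : (y : ↥(B.H (s + t))) = h (s + t) (x : ↥(A.H (s + t)))),
      B.stabIso s t r hB (QuotientAddGroup.mk y) =
        f r s t (A.stabIso s t r hA (QuotientAddGroup.mk x))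

/-!
By induction on the page, `φ_r` is surjective in the columns `p ≥ 1` and injective in the
columns `p ≥ r + 2`: a cycle of `F_r` lifts to a cycle of `E_r` because its differential lands
in a column where `φ_r` is injective, and a cycle of `E_r` killed by `φ` is a boundary because
its would-be preimage under `d_r` comes from a column where `φ_r` is surjective. Passing to the
abutments, `E` vanishes in negative columns, so `L⁰ H_E = H_E`; since `φ_∞` is zero in
column `0`, `φ` maps `H_E` into `L¹ H_F`. Conversely, surjectivity on the graded pieces
`E_∞^{s,·}` for `s ≥ 1` lifts `L^s H_F` to `φ(L^s H_E)` modulo `L^{s+1} H_F`, and descending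
along the finite filtration gives `L¹ H_F ⊆ φ(L¹ H_E)`.
-/

theorem Antitone.le_of_le_sup_succ {α : Type*} [SemilatticeSup α] [OrderBot α] {F M : ℤ → α}
    (hF : Antitone F) (hM : Antitone M) {s₀ s₁ : ℤ} (hs₁ : F s₁ = ⊥)
    (hstep : ∀ s, s₀ ≤ s → F s ≤ M s ⊔ F (s + 1)) {s : ℤ} (hs : s₀ ≤ s) : F s ≤ M s := by
  have hbot : ∀ s, s₁ ≤ s → F s ≤ M s := fun s h => (hs₁ ▸ hF h).trans bot_le
  rcases le_or_gt s (max s₀ s₁) with hle | hlt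
  · induction s, hle using Int.leInductionDown with
    | base => exact hbot _ (le_max_right _ _)
    | pred n _ ih =>
      calc F (n - 1) ≤ M (n - 1) ⊔ F (n - 1 + 1) := hstep _ hs
        _ ≤ M (n - 1) ⊔ M n := sup_le_sup_left ((sub_add_cancel n 1).symm ▸ ih (by omega)) _
        _ = M (n - 1) := sup_eq_left.2 (hM (by omega))
  · exact hbot s (by omega)

namespace ConvSS

variable (A : ConvSS)

theorem subsingleton_E_succ {r : ℕ} {p q : ℤ} [Subsingleton (A.E r p q)] :
    Subsingleton (A.E (r + 1) p q) :=
  (A.next r p q).toEquiv.subsingleton_congr.2 QuotientAddGroup.mk_surjective.subsingleton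

theorem subsingleton_E_of_neg (hcol : ∀ p q : ℤ, p < 0 → Subsingleton (A.E 0 p q)) (r : ℕ)
    {p q : ℤ} (hp : p < 0) : Subsingleton (A.E r p q) := by
  induction r with
  | zero => exact hcol p q hp
  | succ r ih => exact A.subsingleton_E_succ

theorem L_le_L_succ {s t n : ℤ} (hn : s + t = n) [Subsingleton (A.E (A.stab s t) s t)] :
    A.L s n ≤ A.L (s + 1) n := by
  subst hn
  intro x hx
  have : Subsingleton (↥(A.L s (s + t)) ⧸ (A.L (s + 1) (s + t)).addSubgroupOf (A.L s (s + t))) :=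
    (A.stabIso s t _ le_rfl).toEquiv.subsingleton
  have hx0 : ((⟨x, hx⟩ : A.L s (s + t)) :
      ↥(A.L s (s + t)) ⧸ (A.L (s + 1) (s + t)).addSubgroupOf (A.L s (s + t))) = 0 :=
    Subsingleton.elim _ _
  exact AddSubgroup.mem_addSubgroupOf.1 ((QuotientAddGroup.eq_zero_iff _).1 hx0)

theorem L_zero_eq_top (hcol : ∀ p q : ℤ, p < 0 → Subsingleton (A.E 0 p q)) (n : ℤ) :
    A.L 0 n = ⊤ := by
  obtain ⟨s₀, hs₀⟩ := A.L_exhaustive n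
  rcases le_or_gt s₀ 0 with hle | hlt
  · have hmono : ∀ s, s₀ ≤ s → s ≤ 0 → A.L s₀ n ≤ A.L s n := by
      intro s hs
      induction s, hs using Int.leInduction with
      | base => exact fun _ => le_rfl
      | succ s _ ih =>
        intro hs0
        have := A.subsingleton_E_of_neg hcol (A.stab s (n - s)) (p := s) (q := n - s) (by omega)
        exact (ih (by omega)).trans (A.L_le_L_succ (t := n - s) (by ring))
    exact top_unique (hs₀ ▸ hmono 0 hle le_rfl)
  · exact top_unique (hs₀ ▸ A.L_antitone n hlt.le)

end ConvSS

namespace ConvSS.Hom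

variable {A B : ConvSS} (φ : A.Hom B)

theorem f_d_apply (r : ℕ) (p q p' q' : ℤ) (h1 : p + ((r : ℤ) + 2) = p')
    (h2 : q - ((r : ℤ) + 2) + 1 = q') (x : A.E r p q) :
    φ.f r p' q' (A.d r p q p' q' h1 h2 x) = B.d r p q p' q' h1 h2 (φ.f r p q x) :=
  DFunLike.congr_fun (φ.comm r p q p' q' h1 h2) x

theorem f_mem_ker_d {r : ℕ} {p q p' q' : ℤ} {h1 : p + ((r : ℤ) + 2) = p'}
    {h2 : q - ((r : ℤ) + 2) + 1 = q'} {x : A.E r p q} (hx : x ∈ (A.d r p q p' q' h1 h2).ker) :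
    φ.f r p q x ∈ (B.d r p q p' q' h1 h2).ker := by
  rw [AddMonoidHom.mem_ker, ← f_d_apply, hx, map_zero]

theorem f_succ_eq_zero {r : ℕ} {p q : ℤ} (h0 : φ.f r p q = 0) : φ.f (r + 1) p q = 0 := by
  ext z
  obtain ⟨x, hx⟩ := QuotientAddGroup.mk_surjective (A.next r p q z)
  have hfx : ((0 : (B.d r p q _ _ rfl rfl).ker) : B.E r p q) = φ.f r p q x := by simp [h0]
  have hc := φ.compat_next r p q x 0 hfx z hx.symm
  rwa [QuotientAddGroup.mk_zero, AddEquiv.map_eq_zero_iff] at hc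

theorem surjective_f_succ {r : ℕ} {p q : ℤ} (hsurj : Function.Surjective (φ.f r p q))
    (hinj : Function.Injective (φ.f r (p + ((r : ℤ) + 2)) (q - ((r : ℤ) + 2) + 1))) :
    Function.Surjective (φ.f (r + 1) p q) := by
  intro w
  obtain ⟨y, hy⟩ := QuotientAddGroup.mk_surjective (B.next r p q w)
  obtain ⟨x, hx⟩ := hsurj y
  have hx_ker : x ∈ (A.d r p q _ _ rfl rfl).ker := by
    refine hinj ?_
    rw [map_zero, f_d_apply, hx]
    exact y.2
  refine ⟨(A.next r p q).symm (QuotientAddGroup.mk ⟨x, hx_ker⟩), (B.next r p q).injective ?_⟩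
  rw [φ.compat_next r p q ⟨x, hx_ker⟩ y hx.symm _ ((A.next r p q).apply_symm_apply _), hy]

theorem injective_f_succ {r : ℕ} {p q : ℤ} (hinj : Function.Injective (φ.f r p q))
    (hsurj : Function.Surjective (φ.f r (p - ((r : ℤ) + 2)) (q + ((r : ℤ) + 2) - 1))) :
    Function.Injective (φ.f (r + 1) p q) := by
  rw [injective_iff_map_eq_zero]
  intro z hz
  obtain ⟨x, hx⟩ := QuotientAddGroup.mk_surjective (A.next r p q z)
  have hc := φ.compat_next r p q x ⟨_, φ.f_mem_ker_d x.2⟩ rfl z hx.symm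
  rw [hz, map_zero, eq_comm, QuotientAddGroup.eq_zero_iff, AddSubgroup.mem_addSubgroupOf] at hc
  obtain ⟨w, hw⟩ := hc
  obtain ⟨u, rfl⟩ := hsurj w
  have hdu : A.d r _ _ p q (by ring) (by ring) u = x := hinj (by rw [f_d_apply, hw])
  have hx0 : (x : _ ⧸ ((A.d r (p - ((r : ℤ) + 2)) (q + ((r : ℤ) + 2) - 1) p q (by ring)
      (by ring)).range.addSubgroupOf (A.d r p q _ _ rfl rfl).ker)) = 0 :=
    (QuotientAddGroup.eq_zero_iff _).2 (AddSubgroup.mem_addSubgroupOf.2 ⟨u, hdu⟩)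
  rw [← AddEquiv.map_eq_zero_iff (A.next r p q), ← hx, hx0]

theorem f_eq_zero_of_f_zero_eq_zero {p : ℤ} (h0 : ∀ q, φ.f 0 p q = 0) (r : ℕ) (q : ℤ) :
    φ.f r p q = 0 := by
  induction r generalizing q with
  | zero => exact h0 q
  | succ r ih => exact φ.f_succ_eq_zero (ih q)

theorem surjective_and_injective_f (hiso : ∀ p q : ℤ, 1 < p → Function.Bijective (φ.f 0 p q))
    (hepi : ∀ q : ℤ, Function.Surjective (φ.f 0 1 q)) (r : ℕ) :
    (∀ p q : ℤ, 1 ≤ p → Function.Surjective (φ.f r p q)) ∧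
      (∀ p q : ℤ, (r : ℤ) + 2 ≤ p → Function.Injective (φ.f r p q)) := by
  induction r with
  | zero =>
    refine ⟨fun p q hp => ?_, fun p q hp => (hiso p q (by omega)).1⟩
    rcases hp.eq_or_lt with rfl | hp
    exacts [hepi q, (hiso p q hp).2]
  | succ r ih =>
    exact ⟨fun p q hp => φ.surjective_f_succ (ih.1 p q hp) (ih.2 _ _ (by omega)),
      fun p q hp => φ.injective_f_succ (ih.2 p q (by omega)) (ih.1 _ _ (by omega))⟩

theorem map_L_le_L_succ {s t n : ℤ} (hn : s + t = n) (h0 : ∀ r, φ.f r s t = 0) :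
    (A.L s n).map (φ.h n) ≤ B.L (s + 1) n := by
  subst hn
  rintro _ ⟨x, hx, rfl⟩
  have hc := φ.compat_abut s t _ (le_max_left (A.stab s t) (B.stab s t)) (le_max_right _ _)
    ⟨x, hx⟩ ⟨φ.h _ x, φ.filt s _ ⟨x, hx, rfl⟩⟩ rfl
  rw [h0, AddMonoidHom.zero_apply, AddEquiv.map_eq_zero_iff, QuotientAddGroup.eq_zero_iff,
    AddSubgroup.mem_addSubgroupOf] at hc
  exact hc

theorem L_le_map_sup_L_succ {s t n : ℤ} (hn : s + t = n)
    (hsurj : ∀ r, Function.Surjective (φ.f r s t)) :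
    B.L s n ≤ (A.L s n).map (φ.h n) ⊔ B.L (s + 1) n := by
  subst hn
  intro b hb
  have hA := le_max_left (A.stab s t) (B.stab s t)
  have hB := le_max_right (A.stab s t) (B.stab s t)
  obtain ⟨a, ha⟩ := ((hsurj _).comp (A.stabIso s t _ hA).surjective)
    (B.stabIso s t _ hB (QuotientAddGroup.mk ⟨b, hb⟩))
  obtain ⟨x, rfl⟩ := QuotientAddGroup.mk_surjective a
  have hc := φ.compat_abut s t _ hA hB x ⟨φ.h _ x, φ.filt s _ ⟨x, x.2, rfl⟩⟩ rfl
  rw [← Function.comp_apply (f := φ.f _ s t), ha] at hc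
  have hdiff := AddSubgroup.mem_addSubgroupOf.1
    (QuotientAddGroup.eq.1 ((B.stabIso s t _ hB).injective hc))
  rw [← add_neg_cancel_left (φ.h _ x) b]
  exact AddSubgroup.add_mem_sup ⟨x, x.2, rfl⟩ hdiff

end ConvSS.Hom

theorem ss_realignment_epi_general (A B : ConvSS) (φ : ConvSS.Hom A B)
    (hAcol : ∀ p q : ℤ, p < 0 → Subsingleton ↥(A.E 0 p q))
    (hiso : ∀ p q : ℤ, 1 < p → Function.Bijective (φ.f 0 p q))
    (hepi : ∀ q : ℤ, Function.Surjective (φ.f 0 1 q))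
    (hzero : ∀ q : ℤ, φ.f 0 0 q = 0) :
    (∀ (r : ℕ) (p q : ℤ), 1 ≤ p → Function.Surjective (φ.f r p q)) ∧
    (∀ n : ℤ, (φ.h n).range = B.L 1 n) := by
  have hsurj r p q (hp : 1 ≤ p) := (φ.surjective_and_injective_f hiso hepi r).1 p q hp
  refine ⟨hsurj, fun n => le_antisymm ?_ ?_⟩
  · calc (φ.h n).range = (A.L 0 n).map (φ.h n) := by
          rw [A.L_zero_eq_top hAcol n, AddMonoidHom.range_eq_map]
      _ ≤ B.L 1 n := φ.map_L_le_L_succ (zero_add n) (φ.f_eq_zero_of_f_zero_eq_zero hzero · n)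
  · obtain ⟨s₁, hs₁⟩ := B.L_separated n
    calc B.L 1 n ≤ (A.L 1 n).map (φ.h n) :=
          (B.L_antitone n).le_of_le_sup_succ (fun _ _ h => AddSubgroup.map_mono (A.L_antitone n h))
            hs₁ (fun s hs => φ.L_le_map_sup_L_succ (add_sub_cancel s n)
              (fun r => hsurj r s (n - s) hs)) le_rfl
      _ ≤ (φ.h n).range := AddSubgroup.map_le_range _ _

/-- Let `φ : E → F` be a morphism of bounded spectral sequences living
in the columns `p ≥ 0` (I/IV quadrants), converging to filtered abutments `H_E`, `H_F`.
If on the `E₂`-page `φ₂^{p,q}` is an isomorphism for `p > 1`, an epimorphism for `p = 1`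
and zero for `p = 0`, then `φ` is an epimorphism on all later pages in columns `p ≥ 1`
(in particular `φ_∞^{p,q}` is epic for `p ≥ 1`), and the image of the induced map
`H(φ) : H_E → H_F` equals the filtration subspace `L^1 H_F`. -/
theorem ss_realignment_epi (A B : ConvSS) (φ : ConvSS.Hom A B)
    (hAcol : ∀ p q : ℤ, p < 0 → Subsingleton ↥(A.E 0 p q))
    (hBcol : ∀ p q : ℤ, p < 0 → Subsingleton ↥(B.E 0 p q))
    (hiso : ∀ p q : ℤ, 1 < p → Function.Bijective (φ.f 0 p q))
    (hepi : ∀ q : ℤ, Function.Surjective (φ.f 0 1 q))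
    (hzero : ∀ q : ℤ, φ.f 0 0 q = 0) :
    (∀ (r : ℕ) (p q : ℤ), 1 ≤ p → Function.Surjective (φ.f r p q)) ∧
    (∀ n : ℤ, (φ.h n).range = B.L 1 n) :=
  ss_realignment_epi_general A B φ hAcol hiso hepi hzero
end

section
/- Let n ≥ 0 and let 0 = E_{n+1} → E_n → ⋯ → E_1 → E_0 be a chain of morphisms of bounded spectral sequences, with composite maps φ(i,j): E_i → E_j for i ≥ j. Assume (a) the E_2-page of E_i vanishes outside columns p ∈ [i, n], and (b) for each 0 ≤ i ≤ n, φ_2^{p,q}(i, i-1) is an isomorphism for p ≥ i+1 and an epimorphism for p = i. Then for every 0 ≤ i ≤ n, the filtration subspace L^i of the abutment of E_0 equals the image of the induced map on abutments H_{E_i} → H_{E_0}. -/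
/-!
Surjectivity of a morphism of spectral sequences in the columns `p ≥ i + 1` propagates from
`E₂` to every page, together with injectivity in the columns `p ≥ i + r + 2` on page `r`:
a preimage of a cycle is then again a cycle, and a class sent to a boundary is a boundary.
A filtered map that is onto on the graded pieces `L^s / L^{s+1}` for `s ≥ s₀` maps `L^s` onto
`L^s` for `s ≥ s₀`, by downward induction on `s` starting from the separation `L^s = 0`.
Composing along the chain, `H_{E_i} = L^i H_{E_i}` (as `E_i` vanishes left of column `i`) maps onto
`L^i H_{E_0}`.
-/
open CategoryTheory

/-- The composite map on abutments `H_{E_i} → H_{E_0}` induced by a chain of morphisms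
of spectral sequences `⋯ → E_2 → E_1 → E_0` (here `ψ i : E_{i+1} → E_i`). -/
def abutCompDown (𝔼 : ℕ → ConvSS) (ψ : ∀ i : ℕ, ConvSS.Hom (𝔼 (i + 1)) (𝔼 i)) (m : ℤ) :
    ∀ i : ℕ, ↥((𝔼 i).H m) →+ ↥((𝔼 0).H m)
  | 0 => AddMonoidHom.id _
  | (i + 1) => (abutCompDown 𝔼 ψ m i).comp ((ψ i).h m)

theorem AddSubgroup.map_eq_of_exists_neg_add_mem {G H : Type*} [AddGroup G] [AddGroup H]
    (f : G →+ H) {A A' : AddSubgroup G} {B B' : AddSubgroup H} (hA : A' ≤ A)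
    (hAB : A.map f ≤ B) (hA'B' : A'.map f = B') (hlift : ∀ y ∈ B, ∃ x ∈ A, -f x + y ∈ B') :
    A.map f = B := by
  refine hAB.antisymm fun y hy => ?_
  obtain ⟨x, hx, hxy⟩ := hlift y hy
  rw [← hA'B'] at hxy
  obtain ⟨x', hx', hfx'⟩ := hxy
  exact ⟨x + x', add_mem hx (hA hx'), by rw [map_add, hfx', add_neg_cancel_left]⟩

namespace ConvSS

section

variable (A : ConvSS)

theorem subsingleton_E {p q : ℤ} (h : Subsingleton (A.E 0 p q)) (r : ℕ) :
    Subsingleton (A.E r p q) := by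
  induction r with
  | zero => exact h
  | succ r ih =>
    exact (A.next r p q).toEquiv.subsingleton_congr.mpr QuotientAddGroup.mk_surjective.subsingleton

theorem L_succ_eq (s t : ℤ) (h : Subsingleton (A.E 0 s t)) :
    A.L (s + 1) (s + t) = A.L s (s + t) := by
  have := (A.stabIso s t _ le_rfl).toEquiv.subsingleton_congr.mpr (A.subsingleton_E h _)
  rw [QuotientAddGroup.subsingleton_iff, AddSubgroup.addSubgroupOf_eq_top] at this
  exact (A.L_antitone _ (Int.le_add_one le_rfl)).antisymm this

theorem L_eq_of_subsingleton (m : ℤ) {a b : ℤ} (hab : a ≤ b)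
    (h : ∀ s, a ≤ s → s < b → Subsingleton (A.E 0 s (m - s))) : A.L b m = A.L a m := by
  induction b, hab using Int.leInduction with
  | base => rfl
  | succ b hab ih =>
    have := A.L_succ_eq b (m - b) (h b hab (Int.lt_add_one_iff.mpr le_rfl))
    rw [add_sub_cancel] at this
    rw [this, ih fun s has hsb => h s has (by omega)]

theorem L_eq_top {i : ℤ} (h : ∀ p q, p < i → Subsingleton (A.E 0 p q)) (m : ℤ) :
    A.L i m = ⊤ := by
  obtain ⟨s, hs⟩ := A.L_exhaustive m
  rcases le_or_gt i s with his | hsi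
  · exact top_le_iff.mp (hs ▸ A.L_antitone m his)
  · rw [A.L_eq_of_subsingleton m hsi.le fun p _ hp => h p _ hp, hs]

end

namespace Hom

variable {A B : ConvSS} (φ : Hom A B)

theorem comm_apply (r : ℕ) (p q p' q' : ℤ) (h1 : p + ((r : ℤ) + 2) = p')
    (h2 : q - ((r : ℤ) + 2) + 1 = q') (a : A.E r p q) :
    φ.f r p' q' (A.d r p q p' q' h1 h2 a) = B.d r p q p' q' h1 h2 (φ.f r p q a) :=
  DFunLike.congr_fun (φ.comm r p q p' q' h1 h2) a

theorem surjective_succ (r : ℕ) (p q : ℤ) (hsur : Function.Surjective (φ.f r p q))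
    (hinj : Function.Injective (φ.f r (p + ((r : ℤ) + 2)) (q - ((r : ℤ) + 2) + 1))) :
    Function.Surjective (φ.f (r + 1) p q) := by
  intro z
  obtain ⟨y, hy⟩ := QuotientAddGroup.mk_surjective (B.next r p q z)
  obtain ⟨x, hx⟩ := hsur y
  have hdx : A.d r p q _ _ rfl rfl x = 0 :=
    hinj (by rw [φ.comm_apply, hx, map_zero]; exact y.2)
  refine ⟨(A.next r p q).symm (QuotientAddGroup.mk ⟨x, hdx⟩), (B.next r p q).injective ?_⟩
  rw [φ.compat_next r p q ⟨x, hdx⟩ y hx.symm _ ((A.next r p q).apply_symm_apply _), hy]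

theorem injective_succ (r : ℕ) (p q : ℤ)
    (hsur : Function.Surjective (φ.f r (p - ((r : ℤ) + 2)) (q + ((r : ℤ) + 2) - 1)))
    (hinj : Function.Injective (φ.f r p q)) : Function.Injective (φ.f (r + 1) p q) := by
  rw [injective_iff_map_eq_zero]
  intro z hz
  obtain ⟨x, hx⟩ := QuotientAddGroup.mk_surjective (A.next r p q z)
  have hfx : φ.f r p q x ∈ (B.d r p q _ _ rfl rfl).ker := by
    rw [AddMonoidHom.mem_ker, ← φ.comm_apply, AddMonoidHom.mem_ker.mp x.2, map_zero]
  have hcn := φ.compat_next r p q x ⟨_, hfx⟩ rfl z hx.symm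
  rw [hz, map_zero, eq_comm, QuotientAddGroup.eq_zero_iff, AddSubgroup.mem_addSubgroupOf] at hcn
  obtain ⟨w, hw⟩ := hcn
  obtain ⟨u, rfl⟩ := hsur w
  have hxu : A.d r _ _ p q (by ring) (by ring) u = x := hinj (by rw [φ.comm_apply, hw])
  apply (A.next r p q).injective
  rw [map_zero, ← hx, QuotientAddGroup.eq_zero_iff, AddSubgroup.mem_addSubgroupOf]
  exact ⟨u, hxu⟩

theorem surjective_of_page_zero (i : ℤ) (hsur : ∀ q, Function.Surjective (φ.f 0 (i + 1) q))
    (hbij : ∀ p q, i + 2 ≤ p → Function.Bijective (φ.f 0 p q)) (r : ℕ) (p q : ℤ)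
    (hp : i + 1 ≤ p) : Function.Surjective (φ.f r p q) := by
  suffices h : ∀ r : ℕ, (∀ p q, i + 1 ≤ p → Function.Surjective (φ.f r p q)) ∧
      (∀ p q, i + r + 2 ≤ p → Function.Injective (φ.f r p q)) from (h r).1 p q hp
  intro r
  induction r with
  | zero =>
    refine ⟨fun p q hp => ?_, fun p q hp => (hbij p q (by simpa using hp)).injective⟩
    rcases hp.eq_or_lt with rfl | hp
    · exact hsur q
    · exact (hbij p q (by omega)).surjective
  | succ r ih =>
    exact ⟨fun p q hp => φ.surjective_succ r p q (ih.1 p q hp) (ih.2 _ _ (by omega)),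
      fun p q hp => φ.injective_succ r p q (ih.1 _ _ (by omega)) (ih.2 p q (by omega))⟩

theorem exists_neg_add_mem_L_succ (s m : ℤ)
    (hsur : ∀ r, Function.Surjective (φ.f r s (m - s))) :
    ∀ y ∈ B.L s m, ∃ x ∈ A.L s m, -φ.h m x + y ∈ B.L (s + 1) m := by
  obtain ⟨t, rfl⟩ : ∃ t, m = s + t := ⟨m - s, by ring⟩
  rw [add_sub_cancel_left] at hsur
  intro y hy
  have hA := le_max_left (A.stab s t) (B.stab s t)
  have hB := le_max_right (A.stab s t) (B.stab s t)
  obtain ⟨e, he⟩ := hsur _ (B.stabIso s t _ hB (QuotientAddGroup.mk ⟨y, hy⟩))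
  obtain ⟨c, hc⟩ := (A.stabIso s t _ hA).surjective e
  obtain ⟨x, rfl⟩ := QuotientAddGroup.mk_surjective c
  have hfx : φ.h _ x ∈ B.L s (s + t) := φ.filt s _ ⟨x, x.2, rfl⟩
  have hxy := φ.compat_abut s t _ hA hB x ⟨_, hfx⟩ rfl
  rw [hc, he] at hxy
  replace hxy := (B.stabIso s t _ hB).injective hxy
  rw [QuotientAddGroup.eq] at hxy
  exact ⟨x, x.2, hxy⟩

theorem map_L_eq_of_surjective (s₀ : ℤ)
    (hsur : ∀ r s t, s₀ ≤ s → Function.Surjective (φ.f r s t)) (m s : ℤ) (hs : s₀ ≤ s) :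
    (A.L s m).map (φ.h m) = B.L s m := by
  obtain ⟨s₁, hs₁⟩ := B.L_separated m
  refine Int.leInductionDown (m := max s s₁) (motive := fun k _ => s₀ ≤ k →
    (A.L k m).map (φ.h m) = B.L k m) (fun _ => ?_) (fun k _ ih hk => ?_) s (le_max_left _ _) hs
  · exact (φ.filt _ m).antisymm (((B.L_antitone m (le_max_right s s₁)).trans hs₁.le).trans bot_le)
  · have hk' := ih (by omega)
    rw [← sub_add_cancel k 1] at hk'
    exact AddSubgroup.map_eq_of_exists_neg_add_mem _ (A.L_antitone m (Int.le_add_one le_rfl))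
      (φ.filt _ m) hk' (φ.exists_neg_add_mem_L_succ _ m fun r => hsur r _ _ hk)

end Hom

theorem map_L_abutCompDown (𝔼 : ℕ → ConvSS) (ψ : ∀ i : ℕ, Hom (𝔼 (i + 1)) (𝔼 i)) (i : ℕ)
    (hsur : ∀ j < i, ∀ r s t, (j : ℤ) + 1 ≤ s → Function.Surjective ((ψ j).f r s t))
    (m s : ℤ) (hs : i ≤ s) : ((𝔼 i).L s m).map (abutCompDown 𝔼 ψ m i) = (𝔼 0).L s m := by
  induction i with
  | zero => exact AddSubgroup.map_id _
  | succ i ih =>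
    rw [abutCompDown, ← AddSubgroup.map_map,
      (ψ i).map_L_eq_of_surjective (i + 1) (hsur i (by omega)) m s (by omega)]
    exact ih (fun j hj => hsur j (by omega)) (by omega)

end ConvSS

theorem ss_flag_filtration_im_general (n : ℕ) (𝔼 : ℕ → ConvSS)
    (ψ : ∀ i : ℕ, ConvSS.Hom (𝔼 (i + 1)) (𝔼 i))
    (ha : ∀ i : ℕ, i ≤ n + 1 → ∀ p q : ℤ,
      (p < (i : ℤ) ∨ (n : ℤ) < p) → Subsingleton ↥((𝔼 i).E 0 p q))
    (hb_iso : ∀ i : ℕ, i ≤ n → ∀ p q : ℤ, (i : ℤ) + 2 ≤ p →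
      Function.Bijective ((ψ i).f 0 p q))
    (hb_epi : ∀ i : ℕ, i ≤ n → ∀ q : ℤ,
      Function.Surjective ((ψ i).f 0 ((i : ℤ) + 1) q)) :
    ∀ i : ℕ, i ≤ n → ∀ m : ℤ,
      (𝔼 0).L (i : ℤ) m = (abutCompDown 𝔼 ψ m i).range := by
  intro i hi m
  have hsur : ∀ j < i, ∀ r s t, (j : ℤ) + 1 ≤ s → Function.Surjective ((ψ j).f r s t) :=
    fun j hj => (ψ j).surjective_of_page_zero j (hb_epi j (by omega)) (hb_iso j (by omega))
  rw [← ConvSS.map_L_abutCompDown 𝔼 ψ i hsur m i le_rfl,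
    (𝔼 i).L_eq_top (fun p q hp => ha i (by omega) p q (.inl hp)), AddMonoidHom.range_eq_map]

/-- Let `n ≥ 0` and `0 = E_{n+1} → E_n → ⋯ → E_1 → E_0` be a chain of
morphisms of bounded spectral sequences (`𝔼 i` is `E_i` and `ψ i : E_{i+1} → E_i`).
Assume (a) the `E₂`-page of `E_i` vanishes outside the columns `p ∈ [i, n]`, and
(b) each map `φ₂^{p,q}(i+1, i)` in the chain is an isomorphism for `p ≥ i+2` and an
epimorphism for `p = i+1` (i.e. `φ₂(i, i-1)` is an isomorphism for `p ≥ i+1` and epic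
for `p = i`).  Then for every `0 ≤ i ≤ n` the filtration subspace `L^i` of the abutment
of `E_0` equals the image of the induced map `H_{E_i} → H_{E_0}`. -/
theorem ss_flag_filtration_im (n : ℕ) (𝔼 : ℕ → ConvSS)
    (ψ : ∀ i : ℕ, ConvSS.Hom (𝔼 (i + 1)) (𝔼 i))
    (hlast : ∀ (r : ℕ) (p q : ℤ), Subsingleton ↥((𝔼 (n + 1)).E r p q))
    (ha : ∀ i : ℕ, i ≤ n + 1 → ∀ p q : ℤ,
      (p < (i : ℤ) ∨ (n : ℤ) < p) → Subsingleton ↥((𝔼 i).E 0 p q))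
    (hb_iso : ∀ i : ℕ, i ≤ n → ∀ p q : ℤ, (i : ℤ) + 2 ≤ p →
      Function.Bijective ((ψ i).f 0 p q))
    (hb_epi : ∀ i : ℕ, i ≤ n → ∀ q : ℤ,
      Function.Surjective ((ψ i).f 0 ((i : ℤ) + 1) q)) :
    ∀ i : ℕ, i ≤ n → ∀ m : ℤ,
      (𝔼 0).L (i : ℤ) m = (abutCompDown 𝔼 ψ m i).range :=
  ss_flag_filtration_im_general n 𝔼 ψ ha hb_iso hb_epi
end
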